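/- arXiv:1310.5714 — 2 statements merged into one kernel-verified Lean document; each statement's English description precedes it below -/
import Mathlib

section
/- Let F be any CNF. If F has a Resolution refutation of width w and size S, then F has a tree-like Res(w) refutation with at most 5·S nodes. -/
/-- Propositional variables. -/
abbrev PVar := ℕ

/-- A literal: a variable together with a sign (`true` = the positive literal `x`,
`false` = the negated literal `¬x`). -/
abbrev PLit := PVar × Bool

/-- Negation of a literal. -/
def PLit.neg (m : PLit) : PLit := (m.1, !m.2)

/-- A clause: a finite set of literals, read as their disjunction.
Its width is its cardinality. -/
abbrev PClause := Finset PLit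

/-- A CNF formula: a finite set of clauses, read as their conjunction. -/
abbrev PCnf := Finset PClause

/-- A term: a finite set of literals, read as their conjunction. -/
abbrev PTerm := Finset PLit

/-- A DNF: a finite set of terms, read as their disjunction. -/
abbrev PDnf := Finset PTerm

/-- `D` is an `l`-DNF: every term of `D` has at most `l` literals. -/
def IsLDnf (l : ℕ) (D : PDnf) : Prop := ∀ T ∈ D, T.card ≤ l

/-- The negation `¬C` of a clause `C = m₁ ∨ … ∨ m_t`, i.e. the term `¬m₁ ∧ … ∧ ¬m_t`. -/
def PClause.negTerm (C : PClause) : PTerm := C.image PLit.neg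

/-- A clause viewed as a DNF consisting of singleton terms. -/
def PClause.toDnf (C : PClause) : PDnf := C.image (fun m => ({m} : PTerm))

/-- The disjunction `¬l₁ ∨ … ∨ ¬l_s` of the negations of the literals of the
term `T = l₁ ∧ … ∧ l_s`, as a DNF of singleton terms. -/
def PTerm.negLits (T : PTerm) : PDnf := T.image (fun m => ({m.neg} : PTerm))

/-- Binary proof trees whose nodes are labelled by DNFs. -/
inductive PTree : Type where
  | leaf (D : PDnf) : PTree
  | node (D : PDnf) (t₁ t₂ : PTree) : PTree

namespace PTree

/-- The label at the root of the tree. -/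
def concl : PTree → PDnf
  | .leaf D => D
  | .node D _ _ => D

/-- The number of leaves of the tree. -/
def leaves : PTree → ℕ
  | .leaf _ => 1
  | .node _ t₁ t₂ => t₁.leaves + t₂.leaves

/-- The total number of nodes (proof lines) of the tree. -/
def size : PTree → ℕ
  | .leaf _ => 1
  | .node _ t₁ t₂ => t₁.size + t₂.size + 1

/-- The list of all labels occurring in the tree. -/
def labels : PTree → List PDnf
  | .leaf D => [D]
  | .node D t₁ t₂ => D :: (t₁.labels ++ t₂.labels)

/-- Structural validity of a tree-like Res derivation from the set `H` of
hypothesis DNFs: every leaf is a hypothesis or an axiom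
`(l₁∧…∧l_s) ∨ ¬l₁ ∨ … ∨ ¬l_s` (with `s ≥ 1`), and every internal node with
children `A ∨ (l₁∧…∧l_s)` and `B ∨ ¬l₁ ∨ … ∨ ¬l_s` is labelled by the
cut `A ∨ B`. -/
def okStruct (H : Finset PDnf) : PTree → Prop
  | .leaf D => D ∈ H ∨ ∃ T : PTerm, T.Nonempty ∧ D = insert T T.negLits
  | .node D t₁ t₂ => t₁.okStruct H ∧ t₂.okStruct H ∧
      ∃ (T : PTerm) (A B : PDnf), T.Nonempty ∧
        t₁.concl = insert T A ∧ t₂.concl = B ∪ T.negLits ∧ D = A ∪ B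

/-- A valid tree-like Res(l) derivation from the hypotheses `H`: it is
structurally valid and every proof line is an `l`-DNF. -/
def valid (H : Finset PDnf) (l : ℕ) (t : PTree) : Prop :=
  t.okStruct H ∧ ∀ D ∈ t.labels, IsLDnf l D

/-- The number of leaves labelled by an axiom rather than by a hypothesis. -/
def axLeafCount (H : Finset PDnf) : PTree → ℕ
  | .leaf D => if D ∈ H then 0 else 1
  | .node _ t₁ t₂ => t₁.axLeafCount H + t₂.axLeafCount H

end PTree

/-- The set of hypothesis DNFs associated to a CNF: each clause read as a DNF
of singleton terms. -/
def PCnf.toHyps (F : PCnf) : Finset PDnf := F.image PClause.toDnf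

/-- `t` is a tree-like Res(l) refutation of the CNF `F`: a valid tree-like
Res(l) derivation from the clauses of `F` whose root is the empty DNF. -/
def TreeResRefutation (F : PCnf) (l : ℕ) (t : PTree) : Prop :=
  t.valid F.toHyps l ∧ t.concl = ∅

/-- Resolution inference: the clause `C` is obtained from two clauses
`A ∨ x` and `B ∨ ¬x` occurring in `prev` by the resolution rule, yielding `A ∨ B`. -/
def ResStep (prev : List PClause) (C : PClause) : Prop :=
  ∃ A ∈ prev, ∃ B ∈ prev, ∃ x : PVar,
    (x, true) ∈ A ∧ (x, false) ∈ B ∧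
    C = A.erase (x, true) ∪ B.erase (x, false)

/-- `π` is a resolution derivation from the CNF `F`: every clause of `π`
belongs to `F` or follows from two earlier clauses by the resolution rule. -/
def IsResDeriv (F : PCnf) (π : List PClause) : Prop :=
  ∀ i : Fin π.length, π.get i ∈ F ∨ ResStep (π.take i) (π.get i)

/-- `π` is a resolution derivation of the clause `C` from the CNF `F`
(its last clause is `C`); a refutation when `C = ∅`. Its size is `π.length`
and its width is the maximum cardinality of a clause in `π`. -/
def ResDerivOf (F : PCnf) (C : PClause) (π : List PClause) : Prop :=
  IsResDeriv F π ∧ π.getLast? = some C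

/-- A partial assignment: maps some variables to truth values. -/
abbrev PAssign := PVar → Option Bool

/-- The restriction `F|ρ`: delete every clause containing a literal satisfied
by `ρ`, and delete from the remaining clauses every literal falsified by `ρ`. -/
def PCnf.restrict (F : PCnf) (ρ : PAssign) : PCnf :=
  (F.filter (fun C => ∀ m ∈ C, ρ m.1 ≠ some m.2)).image
    (fun C => C.filter (fun m => ρ m.1 ≠ some (!m.2)))

/-!
Read the width-`w` resolution refutation backwards, maintaining a tree-like Res(w) derivation
of `¬C₁ ∨ … ∨ ¬C_k`, where the `Cᵢ` are the clauses still to be accounted for; each `¬Cᵢ` is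
a single term of width at most `w`. A clause of `F` is removed by one cut against its
hypothesis leaf. A resolvent `C` of `A` and `B` is traded for `¬A ∨ ¬B` by one cut against a
three-node derivation of `¬A ∨ ¬B ∨ C`, obtained by cutting the axioms `¬A ∨ A` and `¬B ∨ B`
on the resolved variable. So each clause costs at most four nodes.
-/

lemma PLit.neg_neg (m : PLit) : m.neg.neg = m := by
  simp [PLit.neg]

lemma PLit.neg_injective : Function.Injective PLit.neg :=
  Function.LeftInverse.injective PLit.neg_neg

namespace PClause

lemma negLits_negTerm (C : PClause) : C.negTerm.negLits = C.toDnf := by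
  simp only [negTerm, PTerm.negLits, toDnf, Finset.image_image, Function.comp_def, PLit.neg_neg]

lemma card_negTerm (C : PClause) : C.negTerm.card = C.card :=
  Finset.card_image_of_injective _ PLit.neg_injective

lemma toDnf_insert (m : PLit) (C : PClause) :
    (insert m C).toDnf = insert {m} C.toDnf :=
  Finset.image_insert _ _ _

lemma toDnf_union (C D : PClause) : (C ∪ D).toDnf = C.toDnf ∪ D.toDnf :=
  Finset.image_union _ _

lemma toDnf_empty : (∅ : PClause).toDnf = ∅ := rfl

lemma isLDnf_toDnf {l : ℕ} {C : PClause} (hC : C.card ≤ l) : IsLDnf l C.toDnf := by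
  simp only [IsLDnf, toDnf, Finset.mem_image, forall_exists_index, and_imp]
  rintro _ m hm rfl
  simpa using Nat.one_le_iff_ne_zero.mpr (Finset.card_ne_zero_of_mem hm) |>.trans hC

end PClause

lemma IsLDnf.union {l : ℕ} {D E : PDnf} (hD : IsLDnf l D) (hE : IsLDnf l E) :
    IsLDnf l (D ∪ E) := by
  simp only [IsLDnf, Finset.mem_union]
  rintro T (hT | hT)
  exacts [hD T hT, hE T hT]

lemma IsLDnf.mono {l : ℕ} {D E : PDnf} (hE : IsLDnf l E) (hDE : D ⊆ E) : IsLDnf l D :=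
  fun T hT => hE T (hDE hT)

lemma isResDeriv_iff {F : PCnf} {π : List PClause} :
    IsResDeriv F π ↔ ∀ (i : ℕ) (hi : i < π.length), π[i] ∈ F ∨ ResStep (π.take i) π[i] :=
  Fin.forall_iff

lemma isResDeriv_append_singleton {F : PCnf} {L : List PClause} {C : PClause} :
    IsResDeriv F (L ++ [C]) ↔ IsResDeriv F L ∧ (C ∈ F ∨ ResStep L C) := by
  rw [isResDeriv_iff, isResDeriv_iff]
  simp only [List.length_append, List.length_singleton]
  rw [Nat.forall_lt_succ_right']
  refine and_congr (forall₂_congr fun i hi => ?_) ?_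
  · rw [List.getElem_append_left hi, List.take_append_of_le_length hi.le]
  · simp

namespace PTree

def Derives (H : Finset PDnf) (l : ℕ) (t : PTree) (D : PDnf) : Prop :=
  t.valid H l ∧ t.concl = D

variable {H : Finset PDnf} {l : ℕ}

lemma Derives.isLDnf {t : PTree} {D : PDnf} (h : t.Derives H l D) : IsLDnf l D := by
  obtain ⟨⟨-, hlabels⟩, rfl⟩ := h
  cases t <;> exact hlabels _ (by simp [labels, concl])

lemma derives_leaf_of_mem {D : PDnf} (hD : D ∈ H) (hl : IsLDnf l D) :
    (leaf D).Derives H l D :=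
  ⟨⟨Or.inl hD, by simpa [labels] using hl⟩, rfl⟩

lemma exists_derives_negTerm_toDnf {C : PClause} (hC : C.Nonempty) (hl : C.card ≤ l) :
    ∃ s : PTree, s.Derives H l (insert C.negTerm C.toDnf) ∧ s.size = 1 := by
  refine ⟨leaf _, ⟨⟨Or.inr ⟨C.negTerm, hC.image _, by rw [C.negLits_negTerm]⟩, ?_⟩, rfl⟩, rfl⟩
  simp only [labels, List.mem_singleton, forall_eq, IsLDnf, Finset.mem_insert]
  rintro T (rfl | hT)
  exacts [C.card_negTerm.trans_le hl, PClause.isLDnf_toDnf hl T hT]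

lemma Derives.cut {t₁ t₂ : PTree} {T : PTerm} {A B : PDnf} (hT : T.Nonempty)
    (h₁ : t₁.Derives H l (insert T A)) (h₂ : t₂.Derives H l (B ∪ T.negLits)) :
    (node (A ∪ B) t₁ t₂).Derives H l (A ∪ B) := by
  have hAB : IsLDnf l (A ∪ B) :=
    (h₁.isLDnf.mono (Finset.subset_insert _ _)).union (h₂.isLDnf.mono Finset.subset_union_left)
  refine ⟨⟨⟨h₁.1.1, h₂.1.1, T, A, B, hT, h₁.2, h₂.2, rfl⟩, ?_⟩, rfl⟩
  simp only [labels, List.mem_cons, List.mem_append]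
  rintro D (rfl | hD | hD)
  exacts [hAB, h₁.1.2 D hD, h₂.1.2 D hD]

lemma Derives.cut_negTerm {t₁ t₂ : PTree} {C : PClause} {A B : PDnf} (hC : C.Nonempty)
    (h₁ : t₁.Derives H l (insert C.negTerm A)) (h₂ : t₂.Derives H l (B ∪ C.toDnf)) :
    (node (A ∪ B) t₁ t₂).Derives H l (A ∪ B) :=
  h₁.cut (hC.image _) (C.negLits_negTerm ▸ h₂)

lemma exists_derives_resolvent (x : PVar) (A B : PClause)
    (hA : (insert (x, true) A).card ≤ l) (hB : (insert (x, false) B).card ≤ l) :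
    ∃ s : PTree, s.Derives H l ({(insert (x, true) A).negTerm, (insert (x, false) B).negTerm}
      ∪ (A ∪ B).toDnf) ∧ s.size = 3 := by
  obtain ⟨s₁, h₁, hs₁⟩ := exists_derives_negTerm_toDnf (H := H) (Finset.insert_nonempty _ A) hA
  obtain ⟨s₂, h₂, hs₂⟩ := exists_derives_negTerm_toDnf (H := H) (Finset.insert_nonempty _ B) hB
  rw [PClause.toDnf_insert, Finset.insert_comm] at h₁
  have hx : ({(x, true)} : PTerm).negLits = {{(x, false)}} := rfl
  rw [PClause.toDnf_insert, Finset.insert_eq {(x, false)}, Finset.union_comm,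
    ← Finset.insert_union, ← hx] at h₂
  have hD : insert (insert (x, true) A).negTerm A.toDnf ∪
      insert (insert (x, false) B).negTerm B.toDnf =
      {(insert (x, true) A).negTerm, (insert (x, false) B).negTerm} ∪ (A ∪ B).toDnf := by
    ext T
    simp only [PClause.toDnf_union, Finset.mem_union, Finset.mem_insert, Finset.mem_singleton]
    tauto
  exact ⟨_, hD ▸ Derives.cut (Finset.singleton_nonempty _) h₁ h₂, by simp [size, hs₁, hs₂]⟩

end PTree

open PTree

lemma exists_derives_imp_of_step {F : PCnf} {l : ℕ} {L : List PClause} {C : PClause}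
    (hstep : C ∈ F ∨ ResStep L C) (hL : ∀ D ∈ L, D.card ≤ l) (hC : C.card ≤ l) :
    ∃ M : Finset PClause, (∀ D ∈ M, D ∈ L) ∧
      ∃ s : PTree, s.Derives F.toHyps l (M.image PClause.negTerm ∪ C.toDnf) ∧ s.size ≤ 3 := by
  rcases hstep with hF | ⟨A, hA, B, hB, x, hxA, hxB, rfl⟩
  · refine ⟨∅, by simp, leaf C.toDnf, ?_, by simp [size]⟩
    rw [Finset.image_empty, Finset.empty_union]
    exact derives_leaf_of_mem (Finset.mem_image_of_mem _ hF) (PClause.isLDnf_toDnf hC)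
  · refine ⟨{A, B}, by simp [hA, hB], ?_⟩
    have hA' := hL A hA
    have hB' := hL B hB
    rw [← Finset.insert_erase hxA] at hA' ⊢
    rw [← Finset.insert_erase hxB] at hB' ⊢
    obtain ⟨s, hs, hsize⟩ := exists_derives_resolvent (H := F.toHyps) x _ _ hA' hB'
    exact ⟨s, by simpa using hs, hsize.le⟩

lemma exists_refutation_of_derives_negTerms {F : PCnf} {w : ℕ} {L : List PClause}
    (hL : IsResDeriv F L) (hw : ∀ C ∈ L, C.card ≤ w) (hne : ∅ ∉ L)
    {N : Finset PClause} (hN : ∀ C ∈ N, C ∈ L)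
    {t : PTree} (ht : t.Derives F.toHyps w (N.image PClause.negTerm)) :
    ∃ t' : PTree, TreeResRefutation F w t' ∧ t'.size ≤ t.size + 4 * L.length := by
  induction L using List.reverseRecOn generalizing N t with
  | nil =>
    obtain rfl : N = ∅ := Finset.eq_empty_of_forall_notMem fun C hC => by simpa using hN C hC
    exact ⟨t, ht, by simp⟩
  | append_singleton L C ih =>
    obtain ⟨hL', hstep⟩ := isResDeriv_append_singleton.mp hL
    have hw' : ∀ D ∈ L, D.card ≤ w := fun D hD => hw D (by simp [hD])
    have hne' : ∅ ∉ L := fun h => hne (by simp [h])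
    by_cases hC : C ∈ N
    · obtain ⟨M, hM, s, hs, hsize⟩ := exists_derives_imp_of_step hstep hw' (hw C (by simp))
      have ht' : t.Derives F.toHyps w (insert C.negTerm ((N.erase C).image PClause.negTerm)) := by
        rwa [← Finset.image_insert, Finset.insert_erase hC]
      have hC' : C.Nonempty := Finset.nonempty_iff_ne_empty.mpr fun h => hne (by simp [← h])
      have hcut := Derives.cut_negTerm hC' ht' hs
      rw [← Finset.image_union] at hcut
      have hN' : ∀ D ∈ N.erase C ∪ M, D ∈ L := by
        simp only [Finset.mem_union, Finset.mem_erase]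
        rintro D (⟨hDC, hD⟩ | hD)
        · simpa [hDC] using hN D hD
        · exact hM D hD
      obtain ⟨t', ht', hsize'⟩ := ih hL' hw' hne' hN' hcut
      refine ⟨t', ht', ?_⟩
      simp only [size, List.length_append, List.length_singleton] at hsize' ⊢
      omega
    · have hN' : ∀ D ∈ N, D ∈ L := fun D hD => by
        simpa [show D ≠ C by rintro rfl; exact hC hD] using hN D hD
      obtain ⟨t', ht', hsize'⟩ := ih hL' hw' hne' hN' ht
      exact ⟨t', ht', by simp; omega⟩

lemma exists_refutation_of_empty_mem {F : PCnf} {w : ℕ} {π : List PClause}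
    (hπ : IsResDeriv F π) (hw : ∀ C ∈ π, C.card ≤ w) (hempty : ∅ ∈ π) :
    ∃ t : PTree, TreeResRefutation F w t ∧ t.size ≤ 4 * π.length := by
  induction π using List.reverseRecOn with
  | nil => simp at hempty
  | append_singleton L C ih =>
    obtain ⟨hL, hstep⟩ := isResDeriv_append_singleton.mp hπ
    have hw' : ∀ D ∈ L, D.card ≤ w := fun D hD => hw D (by simp [hD])
    by_cases hemptyL : ∅ ∈ L
    · obtain ⟨t, ht, hsize⟩ := ih hL hw' hemptyL
      exact ⟨t, ht, by simp; omega⟩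
    · -- `C` is the first empty clause, so every `¬D` with `D ∈ L` is a nonempty term, as cuts need
      obtain rfl : C = ∅ := by simpa [hemptyL, eq_comm] using hempty
      obtain ⟨M, hM, s, hs, hsize⟩ := exists_derives_imp_of_step hstep hw' (by simp)
      rw [PClause.toDnf_empty, Finset.union_empty] at hs
      obtain ⟨t, ht, hsize'⟩ := exists_refutation_of_derives_negTerms hL hw' hemptyL hM hs
      exact ⟨t, ht, by simp; omega⟩

/-- If a CNF `F` has a resolution refutation of width `w` and size `S`,
then `F` has a tree-like Res(w) refutation with at most `5·S` nodes. -/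
theorem tree_res_of_narrow_res
    (w S : ℕ) (F : PCnf) (π : List PClause)
    (hπ : ResDerivOf F ∅ π) (hw : ∀ C ∈ π, C.card ≤ w) (hS : π.length = S) :
    ∃ t : PTree, TreeResRefutation F w t ∧ t.size ≤ 5 * S := by
  obtain ⟨t, ht, hsize⟩ := exists_refutation_of_empty_mem hπ.1 hw (List.mem_of_getLast? hπ.2)
  exact ⟨t, ht, by omega⟩
end

section
/- Let F be a k-CNF and let l_1,…,l_s be literals. Suppose that for each 1 ≤ i ≤ s there is a Resolution derivation from F of the unit clause l_i of width at most w, and suppose that the restricted formula F|_{l_1=1,…,l_s=1} has a Resolution refutation of width at most w. Then F has a Resolution refutation of width at most max{w, k}. -/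
/-!
Write `C ∈ Der_K(F)` (`ResDerivable F K C`) when `C` has a resolution derivation from `F`
of width at most `K`.
Resolving a clause in `Der_K(F)` against a derived unit clause `¬m` stays in `Der_K(F)` and
removes `m`. With `K = max w k`, every clause of `F|ρ`, where `ρ` sets `l₁, …, l_s` to true,
is obtained from a clause of `F` (width `≤ k`) by removing falsified literals `m`, whose
negations `¬m` are among the derived units `lᵢ`. So every clause of `F|ρ` lies in `Der_K(F)`,
and then so does every line of the width-`w` refutation of `F|ρ`, in particular `∅`.
-/

inductive ResDerivable (F : PCnf) (K : ℕ) : PClause → Prop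
  | of_mem {C : PClause} : C ∈ F → C.card ≤ K → ResDerivable F K C
  | resolve {A B : PClause} {x : PVar} :
      ResDerivable F K A → ResDerivable F K B → (x, true) ∈ A → (x, false) ∈ B →
      (A.erase (x, true) ∪ B.erase (x, false)).card ≤ K →
      ResDerivable F K (A.erase (x, true) ∪ B.erase (x, false))

lemma ResStep.mono {p q : List PClause} (h : p ⊆ q) {C : PClause} (hC : ResStep p C) :
    ResStep q C := by
  obtain ⟨A, hA, B, hB, x, hxA, hxB, rfl⟩ := hC
  exact ⟨A, h hA, B, h hB, x, hxA, hxB, rfl⟩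

lemma IsResDeriv.append_of {F : PCnf} {π₁ π₂ : List PClause} (h₁ : IsResDeriv F π₁)
    (h₂ : ∀ i : Fin π₂.length, π₂.get i ∈ F ∨ ResStep (π₁ ++ π₂.take i) (π₂.get i)) :
    IsResDeriv F (π₁ ++ π₂) := by
  intro i
  rcases lt_or_ge (i : ℕ) π₁.length with hi | hi
  · have hget : (π₁ ++ π₂).get i = π₁.get ⟨i, hi⟩ := by
      simp [List.getElem_append_left hi]
    rw [hget]
    refine (h₁ ⟨i, hi⟩).imp_right (ResStep.mono fun D hD => ?_)
    rw [List.take_append]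
    exact List.mem_append_left _ hD
  · have hj : (i : ℕ) - π₁.length < π₂.length := by
      have := i.isLt
      simp only [List.length_append] at this
      omega
    have hget : (π₁ ++ π₂).get i = π₂.get ⟨(i : ℕ) - π₁.length, hj⟩ := by
      simp [List.getElem_append_right hi]
    have htake : (π₁ ++ π₂).take i = π₁ ++ π₂.take ((i : ℕ) - π₁.length) := by
      rw [List.take_append, List.take_of_length_le hi]
    rw [hget, htake]
    exact h₂ ⟨(i : ℕ) - π₁.length, hj⟩

lemma IsResDeriv.append {F : PCnf} {π₁ π₂ : List PClause} (h₁ : IsResDeriv F π₁)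
    (h₂ : IsResDeriv F π₂) : IsResDeriv F (π₁ ++ π₂) :=
  h₁.append_of fun i => (h₂ i).imp_right
    (ResStep.mono fun _ hD => List.mem_append_right _ hD)

lemma IsResDeriv.concat {F : PCnf} {π : List PClause} {C : PClause} (h : IsResDeriv F π)
    (hC : ResStep π C) : IsResDeriv F (π ++ [C]) :=
  h.append_of fun i => by
    obtain ⟨i, hi⟩ := i
    obtain rfl : i = 0 := by simpa using hi
    simpa using Or.inr hC

lemma ResDerivable.card_le {F : PCnf} {K : ℕ} {C : PClause} (h : ResDerivable F K C) :
    C.card ≤ K := by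
  cases h <;> assumption

lemma ResDerivable.exists_resDerivOf {F : PCnf} {K : ℕ} {C : PClause}
    (h : ResDerivable F K C) : ∃ π, ResDerivOf F C π ∧ ∀ D ∈ π, D.card ≤ K := by
  induction h with
  | of_mem hC hCK =>
    exact ⟨[_], ⟨fun _ => Or.inl (by simpa using hC), rfl⟩, by simpa using hCK⟩
  | resolve _ _ hxA hxB hK ihA ihB =>
    obtain ⟨πA, ⟨hπA, hlastA⟩, hwA⟩ := ihA
    obtain ⟨πB, ⟨hπB, hlastB⟩, hwB⟩ := ihB
    refine ⟨πA ++ πB ++ [_], ⟨(hπA.append hπB).concat ⟨_, ?_, _, ?_, _, hxA, hxB, rfl⟩,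
      by simp⟩, ?_⟩
    · simp [List.mem_of_getLast? hlastA]
    · simp [List.mem_of_getLast? hlastB]
    · simp only [List.mem_append, List.mem_singleton]
      rintro D ((hD | hD) | rfl)
      exacts [hwA D hD, hwB D hD, hK]

lemma IsResDeriv.resDerivable {F G : PCnf} {K : ℕ} {π : List PClause}
    (hπ : IsResDeriv G π) (hw : ∀ D ∈ π, D.card ≤ K) (hG : ∀ D ∈ G, ResDerivable F K D) :
    ∀ D ∈ π, ResDerivable F K D := by
  suffices h : ∀ i (hi : i < π.length), ResDerivable F K π[i] by
    intro D hD
    obtain ⟨i, hi, rfl⟩ := List.mem_iff_getElem.mp hD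
    exact h i hi
  intro i
  induction i using Nat.strong_induction_on with
  | _ i ih =>
    intro hi
    rcases hπ ⟨i, hi⟩ with hmem | ⟨A, hA, B, hB, x, hxA, hxB, hres⟩
    · exact hG _ hmem
    obtain ⟨a, ha, rfl⟩ := List.mem_take_iff_getElem.mp hA
    obtain ⟨b, hb, rfl⟩ := List.mem_take_iff_getElem.mp hB
    rw [lt_min_iff] at ha hb
    simp only [List.get_eq_getElem] at hres
    rw [hres]
    exact .resolve (ih a ha.1 ha.2) (ih b hb.1 hb.2) hxA hxB (hres ▸ hw _ (List.getElem_mem hi))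

lemma ResDerivOf.resDerivable {F G : PCnf} {K : ℕ} {C : PClause} {π : List PClause}
    (hπ : ResDerivOf G C π) (hw : ∀ D ∈ π, D.card ≤ K) (hG : ∀ D ∈ G, ResDerivable F K D) :
    ResDerivable F K C :=
  hπ.1.resDerivable hw hG C (List.mem_of_getLast? hπ.2)

lemma ResDerivable.erase_of_unit {F : PCnf} {K : ℕ} {C : PClause} {m : PLit}
    (hC : ResDerivable F K C) (hm : m ∈ C) (hunit : ResDerivable F K {m.neg}) :
    ResDerivable F K (C.erase m) := by
  have hK : (C.erase m).card ≤ K := (Finset.card_erase_le).trans hC.card_le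
  obtain ⟨x, _ | _⟩ := m
  · have h := ResDerivable.resolve (x := x) hunit hC (by simp [PLit.neg]) hm
    simp only [PLit.neg, Bool.not_false, Finset.erase_singleton, Finset.empty_union] at h
    exact h hK
  · have h := ResDerivable.resolve (x := x) hC hunit hm (by simp [PLit.neg])
    simp only [PLit.neg, Bool.not_true, Finset.erase_singleton, Finset.union_empty] at h
    exact h hK

lemma ResDerivable.sdiff_of_units {F : PCnf} {K : ℕ} {C : PClause} (S : Finset PLit)
    (hC : ResDerivable F K C) (hunits : ∀ m ∈ S, ResDerivable F K {m.neg}) :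
    ResDerivable F K (C \ S) := by
  classical
  induction S using Finset.induction_on with
  | empty => simpa using hC
  | @insert a S _ ih =>
    have ih := ih fun m hm => hunits m (Finset.mem_insert_of_mem hm)
    rw [Finset.sdiff_insert]
    by_cases ha : a ∈ C \ S
    · exact ih.erase_of_unit ha (hunits a (Finset.mem_insert_self a S))
    · rwa [Finset.erase_eq_of_notMem ha]

lemma PCnf.resDerivable_of_mem_restrict {F : PCnf} {K : ℕ} (hF : ∀ C ∈ F, C.card ≤ K)
    {ρ : PAssign} (hρ : ∀ m : PLit, ρ m.1 = some m.2 → ResDerivable F K {m}) :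
    ∀ D ∈ F.restrict ρ, ResDerivable F K D := by
  classical
  intro D hD
  obtain ⟨C, hC, rfl⟩ := Finset.mem_image.mp hD
  have hCF := (Finset.mem_filter.mp hC).1
  have hsplit : C.filter (fun m => ρ m.1 ≠ some (!m.2)) =
      C \ C.filter (fun m => ρ m.1 = some (!m.2)) := by
    ext m
    simp only [Finset.mem_filter, Finset.mem_sdiff]
    tauto
  rw [hsplit]
  exact (ResDerivable.of_mem hCF (hF C hCF)).sdiff_of_units _
    fun m hm => hρ m.neg (Finset.mem_filter.mp hm).2

lemma mem_of_find?_fst_map_snd {ls : List PLit} {v : PVar} {b : Bool}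
    (h : (ls.find? (fun m => m.1 == v)).map (·.2) = some b) : (v, b) ∈ ls := by
  obtain ⟨m, hfind, rfl⟩ := Option.map_eq_some_iff.mp h
  have hv : m.1 = v := by simpa using List.find?_some hfind
  exact hv ▸ List.mem_of_find?_eq_some hfind

/-- Let `F` be a `k`-CNF and `ls = l₁, …, l_s` literals.  If for each `i`
there is a resolution derivation from `F` of the unit clause `lᵢ` of width at most `w`,
and the restriction `F|_{l₁=1,…,l_s=1}` has a resolution refutation of width at most `w`,
then `F` has a resolution refutation of width at most `max w k`. -/
theorem refutation_from_unit_clauses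
    (k w : ℕ) (F : PCnf) (hF : ∀ C ∈ F, C.card ≤ k)
    (ls : List PLit)
    (hunit : ∀ m ∈ ls, ∃ π : List PClause, ResDerivOf F {m} π ∧ ∀ C ∈ π, C.card ≤ w)
    (href : ∃ π : List PClause,
      ResDerivOf (F.restrict (fun v => (ls.find? (fun m => m.1 == v)).map (·.2))) ∅ π ∧
      ∀ C ∈ π, C.card ≤ w) :
    ∃ π : List PClause, ResDerivOf F ∅ π ∧ ∀ C ∈ π, C.card ≤ max w k := by
  have hFK : ∀ C ∈ F, C.card ≤ max w k := fun C hC => (hF C hC).trans (le_max_right w k)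
  have hF' : ∀ C ∈ F, ResDerivable F (max w k) C := fun C hC => .of_mem hC (hFK C hC)
  have hρ : ∀ m : PLit, (ls.find? (fun l => l.1 == m.1)).map (·.2) = some m.2 →
      ResDerivable F (max w k) {m} := by
    intro m hm
    obtain ⟨π, hπ, hw⟩ := hunit m (mem_of_find?_fst_map_snd hm)
    exact hπ.resDerivable (fun C hC => (hw C hC).trans (le_max_left w k)) hF'
  obtain ⟨π, hπ, hw⟩ := href
  have hempty : ResDerivable F (max w k) ∅ :=
    hπ.resDerivable (fun C hC => (hw C hC).trans (le_max_left w k))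
      (PCnf.resDerivable_of_mem_restrict hFK hρ)
  exact hempty.exists_resDerivOf
end
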